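/- arXiv:0911.0353 — 2 statements merged into one kernel-verified Lean document; each statement's English description precedes it below -/
import Mathlib

section
/- Let a < T be real numbers and let f : ℝ × ℝ × ℝ × ℝ → ℝ, (t, y, v, z) ↦ f(t, y, v, z), be continuously differentiable. Suppose ỹ ∈ C¹([a,T], ℝ) with ỹ(a) = α is a local extremizer (a local minimizer or local maximizer with respect to the C¹ norm) of the functional J[y] = ∫_a^T f(t, y(t), y'(t), y(T)) dt among all y ∈ C¹([a,T], ℝ) with y(a) = α and y(T) free, and suppose the map t ↦ f_v(t, ỹ(t), ỹ'(t), ỹ(T)) is differentiable on [a,T]. Then (i) d/dt f_v(t, ỹ(t), ỹ'(t), ỹ(T)) = f_y(t, ỹ(t), ỹ'(t), ỹ(T)) for all t ∈ [a,T], and (ii) f_v(T, ỹ(T), ỹ'(T), ỹ(T)) = − ∫_a^T f_z(t, ỹ(t), ỹ'(t), ỹ(T)) dt. -/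
open Set intervalIntegral

/-- Partial derivative of `f (t, y, v, z)` with respect to the second argument `y`. -/
noncomputable def fy (f : ℝ → ℝ → ℝ → ℝ → ℝ) (t y v z : ℝ) : ℝ :=
  deriv (fun s => f t s v z) y

/-- Partial derivative of `f (t, y, v, z)` with respect to the third argument `v`. -/
noncomputable def fv (f : ℝ → ℝ → ℝ → ℝ → ℝ) (t y v z : ℝ) : ℝ :=
  deriv (fun s => f t y s z) v

/-- Partial derivative of `f (t, y, v, z)` with respect to the fourth argument `z`. -/
noncomputable def fz (f : ℝ → ℝ → ℝ → ℝ → ℝ) (t y v z : ℝ) : ℝ :=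
  deriv (fun s => f t y v s) z

/-!
Perturb `ytil` to `ytil + s η` with `η a = 0`; the value at `T` moves too, so the first variation is
`∫ (f_y η + f_v η' + f_z η(T)) = 0`. Writing `H t = ∫_a^t f_y` and integrating `f_y η` by parts
turns this into `(H T + ∫ f_z) η(T) + ∫ (f_v - H) η' = 0`. Test functions with `η(T) = 0` give,
by the du Bois-Reymond lemma, `f_v = H + c` on `[a, T]`, whence (i); the test function `t - a`
then gives `H T + c + ∫ f_z = 0`, which is (ii).
-/

open MeasureTheory Filter Topology

def uncurry4 (f : ℝ → ℝ → ℝ → ℝ → ℝ) (p : ℝ × ℝ × ℝ × ℝ) : ℝ :=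
  f p.1 p.2.1 p.2.2.1 p.2.2.2

section PartialDerivatives

variable {f : ℝ → ℝ → ℝ → ℝ → ℝ} {t y v z : ℝ}

theorem fy_eq_fderiv (hf : DifferentiableAt ℝ (uncurry4 f) (t, y, v, z)) :
    fy f t y v z = fderiv ℝ (uncurry4 f) (t, y, v, z) (0, 1, 0, 0) := by
  exact (hf.hasFDerivAt.comp_hasDerivAt y <|
    (hasDerivAt_const y t).prodMk <| (hasDerivAt_id' y).prodMk <|
      (hasDerivAt_const y v).prodMk (hasDerivAt_const y z)).deriv

theorem fv_eq_fderiv (hf : DifferentiableAt ℝ (uncurry4 f) (t, y, v, z)) :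
    fv f t y v z = fderiv ℝ (uncurry4 f) (t, y, v, z) (0, 0, 1, 0) := by
  exact (hf.hasFDerivAt.comp_hasDerivAt v <|
    (hasDerivAt_const v t).prodMk <| (hasDerivAt_const v y).prodMk <|
      (hasDerivAt_id' v).prodMk (hasDerivAt_const v z)).deriv

theorem fz_eq_fderiv (hf : DifferentiableAt ℝ (uncurry4 f) (t, y, v, z)) :
    fz f t y v z = fderiv ℝ (uncurry4 f) (t, y, v, z) (0, 0, 0, 1) := by
  exact (hf.hasFDerivAt.comp_hasDerivAt z <|
    (hasDerivAt_const z t).prodMk <| (hasDerivAt_const z y).prodMk <|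
      (hasDerivAt_const z v).prodMk (hasDerivAt_id' z)).deriv

theorem fderiv_uncurry4_apply (hf : DifferentiableAt ℝ (uncurry4 f) (t, y, v, z))
    (dy dv dz : ℝ) :
    fderiv ℝ (uncurry4 f) (t, y, v, z) (0, dy, dv, dz)
      = fy f t y v z * dy + fv f t y v z * dv + fz f t y v z * dz := by
  have hsplit : ((0, dy, dv, dz) : ℝ × ℝ × ℝ × ℝ)
      = dy • (0, 1, 0, 0) + dv • (0, 0, 1, 0) + dz • (0, 0, 0, 1) := by
    simp
  rw [hsplit, map_add, map_add, map_smul, map_smul, map_smul, fy_eq_fderiv hf,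
    fv_eq_fderiv hf, fz_eq_fderiv hf]
  simp only [smul_eq_mul]
  ring

theorem continuous_fy (hf : ContDiff ℝ 1 (uncurry4 f)) :
    Continuous fun p : ℝ × ℝ × ℝ × ℝ => fy f p.1 p.2.1 p.2.2.1 p.2.2.2 := by
  simp_rw [fy_eq_fderiv (hf.differentiable one_ne_zero _)]
  exact (hf.continuous_fderiv one_ne_zero).clm_apply continuous_const

theorem continuous_fv (hf : ContDiff ℝ 1 (uncurry4 f)) :
    Continuous fun p : ℝ × ℝ × ℝ × ℝ => fv f p.1 p.2.1 p.2.2.1 p.2.2.2 := by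
  simp_rw [fv_eq_fderiv (hf.differentiable one_ne_zero _)]
  exact (hf.continuous_fderiv one_ne_zero).clm_apply continuous_const

theorem continuous_fz (hf : ContDiff ℝ 1 (uncurry4 f)) :
    Continuous fun p : ℝ × ℝ × ℝ × ℝ => fz f p.1 p.2.1 p.2.2.1 p.2.2.2 := by
  simp_rw [fz_eq_fderiv (hf.differentiable one_ne_zero _)]
  exact (hf.continuous_fderiv one_ne_zero).clm_apply continuous_const

end PartialDerivatives

theorem hasDerivAt_integral_comp_add_smul {E : Type*} [NormedAddCommGroup E] [NormedSpace ℝ E]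
    {F : E → ℝ} (hF : ContDiff ℝ 1 F) {P w : ℝ → E} (hP : Continuous P) (hw : Continuous w)
    (a b : ℝ) :
    HasDerivAt (fun s : ℝ => ∫ t in a..b, F (P t + s • w t))
      (∫ t in a..b, fderiv ℝ F (P t) (w t)) 0 := by
  have hF' : Continuous fun q : ℝ × ℝ => fderiv ℝ F (P q.2 + q.1 • w q.2) (w q.2) :=
    ((hF.continuous_fderiv one_ne_zero).comp (by fun_prop)).clm_apply (hw.comp continuous_snd)
  have hcpt : IsCompact (Metric.closedBall (0 : ℝ) 1 ×ˢ uIcc a b) :=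
    (isCompact_closedBall 0 1).prod isCompact_uIcc
  obtain ⟨C, hC⟩ := hcpt.exists_bound_of_continuousOn hF'.continuousOn
  have hderiv : ∀ s t, HasDerivAt (fun s => F (P t + s • w t))
      (fderiv ℝ F (P t + s • w t) (w t)) s := fun s t => by
    have h := (hF.differentiable one_ne_zero _).hasFDerivAt.comp_hasDerivAt s
      (((hasDerivAt_id' s).smul_const (w t)).const_add (P t))
    rw [one_smul] at h
    exact h
  have key := intervalIntegral.hasDerivAt_integral_of_dominated_loc_of_deriv_le (μ := volume)
    (bound := fun _ => C)
    (Metric.closedBall_mem_nhds (0 : ℝ) one_pos)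
    (.of_forall fun s => (hF.continuous.comp (by fun_prop)).aestronglyMeasurable)
    ((hF.continuous.comp (by fun_prop)).intervalIntegrable a b)
    ((hF'.comp (Continuous.prodMk_right 0)).aestronglyMeasurable)
    (.of_forall fun t ht s hs => hC (s, t) ⟨hs, uIoc_subset_uIcc ht⟩) intervalIntegrable_const
    (.of_forall fun t _ s _ => hderiv s t)
  simpa using key.2

theorem eventually_forall_abs_mul_lt {K : Set ℝ} (hK : IsCompact K) {g : ℝ → ℝ}
    (hg : ContinuousOn g K) {ε : ℝ} (hε : 0 < ε) :
    ∀ᶠ s in 𝓝 (0 : ℝ), ∀ t ∈ K, |s * g t| < ε := by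
  obtain ⟨C, hC⟩ := hK.exists_bound_of_continuousOn hg
  have hsmall : ∀ᶠ s in 𝓝 (0 : ℝ), |s| * C < ε :=
    (continuous_abs.mul continuous_const).continuousAt.eventually_lt continuousAt_const
      (by simpa using hε)
  filter_upwards [hsmall] with s hs t ht
  calc |s * g t| = |s| * ‖g t‖ := abs_mul s (g t)
    _ ≤ |s| * C := mul_le_mul_of_nonneg_left (hC t ht) (abs_nonneg s)
    _ < ε := hs

noncomputable def endpointFunctional (f : ℝ → ℝ → ℝ → ℝ → ℝ) (a T : ℝ) (y : ℝ → ℝ) : ℝ :=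
  ∫ t in a..T, f t (y t) (deriv y t) (y T)

def IsLocalC1Extremizer (f : ℝ → ℝ → ℝ → ℝ → ℝ) (a T α : ℝ) (ytil : ℝ → ℝ) : Prop :=
  ∃ ε > 0,
    ((∀ y : ℝ → ℝ, ContDiff ℝ 1 y → y a = α →
        (∀ t ∈ Icc a T, |y t - ytil t| < ε ∧ |deriv y t - deriv ytil t| < ε) →
        endpointFunctional f a T y ≤ endpointFunctional f a T ytil) ∨
      (∀ y : ℝ → ℝ, ContDiff ℝ 1 y → y a = α →
        (∀ t ∈ Icc a T, |y t - ytil t| < ε ∧ |deriv y t - deriv ytil t| < ε) →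
        endpointFunctional f a T ytil ≤ endpointFunctional f a T y))

section FirstVariation

variable {f : ℝ → ℝ → ℝ → ℝ → ℝ} {a T α : ℝ} {ytil η : ℝ → ℝ}

theorem deriv_add_mul (hy : ContDiff ℝ 1 ytil) (hη : ContDiff ℝ 1 η) (s t : ℝ) :
    deriv (fun t => ytil t + s * η t) t = deriv ytil t + s * deriv η t :=
  (((hy.differentiable one_ne_zero) t).hasDerivAt.add
    (((hη.differentiable one_ne_zero) t).hasDerivAt.const_mul s)).deriv

theorem IsLocalC1Extremizer.isLocalExtr_add_mul (hext : IsLocalC1Extremizer f a T α ytil)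
    (hy : ContDiff ℝ 1 ytil) (hya : ytil a = α) (hη : ContDiff ℝ 1 η) (hηa : η a = 0) :
    IsLocalExtr (fun s => endpointFunctional f a T fun t => ytil t + s * η t) 0 := by
  obtain ⟨ε, hε, hmax | hmin⟩ := hext
  all_goals
    have hclose : ∀ᶠ s in 𝓝 (0 : ℝ), ∀ t ∈ Icc a T,
        |ytil t + s * η t - ytil t| < ε ∧
          |deriv (fun t => ytil t + s * η t) t - deriv ytil t| < ε := by
      filter_upwards [eventually_forall_abs_mul_lt isCompact_Icc hη.continuous.continuousOn hε,
        eventually_forall_abs_mul_lt isCompact_Icc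
          (hη.continuous_deriv le_rfl).continuousOn hε] with s hη_small hη'_small t ht
      simpa [deriv_add_mul hy hη] using And.intro (hη_small t ht) (hη'_small t ht)
    have hcomp : ∀ s, ContDiff ℝ 1 (fun t => ytil t + s * η t) :=
      fun s => hy.add (contDiff_const.mul hη)
  · refine .inr (hclose.mono fun s hs => ?_)
    simpa using hmax _ (hcomp s) (by simp [hya, hηa]) hs
  · refine .inl (hclose.mono fun s hs => ?_)
    simpa using hmin _ (hcomp s) (by simp [hya, hηa]) hs

theorem IsLocalC1Extremizer.integral_first_variation_eq_zero
    (hext : IsLocalC1Extremizer f a T α ytil) (hf : ContDiff ℝ 1 (uncurry4 f))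
    (hy : ContDiff ℝ 1 ytil) (hya : ytil a = α) (hη : ContDiff ℝ 1 η) (hηa : η a = 0) :
    ∫ t in a..T, (fy f t (ytil t) (deriv ytil t) (ytil T) * η t
      + fv f t (ytil t) (deriv ytil t) (ytil T) * deriv η t
      + fz f t (ytil t) (deriv ytil t) (ytil T) * η T) = 0 := by
  have hyc := hy.continuous
  have hy'c := hy.continuous_deriv le_rfl
  have hηc := hη.continuous
  have hη'c := hη.continuous_deriv le_rfl
  have hd := hasDerivAt_integral_comp_add_smul hf
    (P := fun t => (t, ytil t, deriv ytil t, ytil T)) (w := fun t => (0, η t, deriv η t, η T))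
    (by fun_prop) (by fun_prop) a T
  have hJ : (fun s : ℝ => ∫ t in a..T,
        uncurry4 f ((t, ytil t, deriv ytil t, ytil T) + s • (0, η t, deriv η t, η T)))
      = fun s => endpointFunctional f a T fun t => ytil t + s * η t := by
    ext s
    simp [endpointFunctional, uncurry4, deriv_add_mul hy hη]
  rw [hJ] at hd
  rw [← (hext.isLocalExtr_add_mul hy hya hη hηa).hasDerivAt_eq_zero hd]
  simp only [fderiv_uncurry4_apply (hf.differentiable one_ne_zero _)]

end FirstVariation

section DuBoisReymond

variable {a b : ℝ}

theorem eqOn_zero_of_integral_sq_eq_zero (hab : a < b) {φ : ℝ → ℝ} (hφ : Continuous φ)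
    (h : ∫ t in a..b, φ t ^ 2 = 0) : EqOn φ 0 (Icc a b) := by
  have hsq : (fun t => φ t ^ 2) =ᵐ[volume.restrict (Icc a b)] 0 := by
    rw [← Measure.restrict_congr_set Ioc_ae_eq_Icc]
    exact (integral_eq_zero_iff_of_le_of_nonneg_ae hab.le (.of_forall fun t => sq_nonneg _)
      ((hφ.pow 2).intervalIntegrable a b)).1 h
  intro t ht
  exact pow_eq_zero_iff two_ne_zero |>.1 <|
    Measure.eqOn_Icc_of_ae_eq volume hab.ne hsq (hφ.pow 2).continuousOn continuousOn_const ht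

theorem exists_eqOn_const_of_integral_mul_deriv_eq_zero (hab : a < b) {φ : ℝ → ℝ}
    (hφ : Continuous φ)
    (h : ∀ η : ℝ → ℝ, ContDiff ℝ 1 η → η a = 0 → η b = 0 → ∫ t in a..b, φ t * deriv η t = 0) :
    ∃ c, EqOn φ (fun _ => c) (Icc a b) := by
  set c := (∫ t in a..b, φ t) / (b - a)
  set ψ := fun t => φ t - c
  have hψ : Continuous ψ := hφ.sub continuous_const
  have hψ_int : ∫ t in a..b, ψ t = 0 := by
    rw [intervalIntegral.integral_sub (hφ.intervalIntegrable a b) intervalIntegrable_const,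
      intervalIntegral.integral_const, smul_eq_mul, mul_div_cancel₀ _ (sub_ne_zero.2 hab.ne')]
    exact sub_self _
  -- `φ - c` has mean zero, so its primitive vanishes at both ends
  set η := fun t => ∫ u in a..t, ψ u
  have hη' : deriv η = ψ := funext (Continuous.deriv_integral ψ hψ a)
  have hη : ContDiff ℝ 1 η :=
    contDiff_one_iff_deriv.2
      ⟨fun t => (hψ.integral_hasStrictDerivAt a t).hasDerivAt.differentiableAt, hη' ▸ hψ⟩
  have hsq : ∫ t in a..b, ψ t ^ 2 = 0 := by
    have hφψ := h η hη intervalIntegral.integral_same hψ_int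
    rw [hη'] at hφψ
    calc ∫ t in a..b, ψ t ^ 2 = (∫ t in a..b, φ t * ψ t) - c * ∫ t in a..b, ψ t := by
          rw [← intervalIntegral.integral_const_mul,
            ← intervalIntegral.integral_sub (f := fun t => φ t * ψ t) (g := fun t => c * ψ t)
              ((hφ.mul hψ).intervalIntegrable a b)
              ((continuous_const.mul hψ).intervalIntegrable a b)]
          congr 1 with t
          ring
      _ = 0 := by rw [hφψ, hψ_int, mul_zero, sub_zero]
  exact ⟨c, fun t ht => sub_eq_zero.1 (eqOn_zero_of_integral_sq_eq_zero hab hψ hsq ht)⟩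

end DuBoisReymond

section EulerLagrange

variable {a T : ℝ} {G F K : ℝ → ℝ}

theorem integral_first_variation_eq (hG : Continuous G) (hF : Continuous F) (hK : Continuous K)
    {η : ℝ → ℝ} (hη : ContDiff ℝ 1 η) (hηa : η a = 0) :
    ∫ t in a..T, (G t * η t + F t * deriv η t + K t * η T)
      = ((∫ t in a..T, G t) + ∫ t in a..T, K t) * η T
        + ∫ t in a..T, (F t - ∫ u in a..t, G u) * deriv η t := by
  set H := fun t => ∫ u in a..t, G u
  have hH : ∀ t, HasDerivAt H (G t) t := fun t => (hG.integral_hasStrictDerivAt a t).hasDerivAt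
  have hHc : Continuous H := continuous_iff_continuousAt.2 fun t => (hH t).continuousAt
  have hη'c := hη.continuous_deriv le_rfl
  have hparts : ∫ t in a..T, H t * deriv η t = H T * η T - ∫ t in a..T, G t * η t := by
    simpa [H, hηa] using integral_mul_deriv_eq_deriv_mul (fun t _ => hH t)
      (fun t _ => (hη.differentiable one_ne_zero t).hasDerivAt) (hG.intervalIntegrable a T)
      (hη'c.intervalIntegrable a T)
  have iGη : IntervalIntegrable (fun t => G t * η t) volume a T :=
    (hG.mul hη.continuous).intervalIntegrable a T
  have iFη' : IntervalIntegrable (fun t => F t * deriv η t) volume a T :=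
    (hF.mul hη'c).intervalIntegrable a T
  have iHη' : IntervalIntegrable (fun t => H t * deriv η t) volume a T :=
    (hHc.mul hη'c).intervalIntegrable a T
  have iKη : IntervalIntegrable (fun t => K t * η T) volume a T :=
    (hK.mul continuous_const).intervalIntegrable a T
  simp_rw [sub_mul]
  rw [intervalIntegral.integral_add (iGη.add iFη') iKη, intervalIntegral.integral_add iGη iFη',
    intervalIntegral.integral_mul_const, intervalIntegral.integral_sub iFη' iHη', hparts]
  ring

theorem exists_eqOn_primitive_add_const_of_first_variation (haT : a < T) (hG : Continuous G)
    (hF : Continuous F) (hK : Continuous K)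
    (h : ∀ η : ℝ → ℝ, ContDiff ℝ 1 η → η a = 0 →
      ∫ t in a..T, (G t * η t + F t * deriv η t + K t * η T) = 0) :
    ∃ c, EqOn F (fun t => (∫ u in a..t, G u) + c) (Icc a T) ∧ F T = -∫ t in a..T, K t := by
  set H := fun t => ∫ u in a..t, G u
  have hHc : Continuous H := continuous_iff_continuousAt.2 fun t =>
    (hG.integral_hasStrictDerivAt a t).hasDerivAt.continuousAt
  have h' : ∀ η : ℝ → ℝ, ContDiff ℝ 1 η → η a = 0 →
      (H T + ∫ t in a..T, K t) * η T + ∫ t in a..T, (F t - H t) * deriv η t = 0 :=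
    fun η hη hηa => (integral_first_variation_eq hG hF hK hη hηa).symm.trans (h η hη hηa)
  obtain ⟨c, hc⟩ := exists_eqOn_const_of_integral_mul_deriv_eq_zero haT (hF.sub hHc)
    fun η hη hηa hηT => by simpa [hηT] using h' η hη hηa
  have hFH : EqOn F (fun t => H t + c) (Icc a T) := fun t ht => eq_add_of_sub_eq' (hc ht)
  refine ⟨c, hFH, ?_⟩
  have hlin := h' (fun t => t - a) (by fun_prop) (sub_self a)
  have hconst : ∫ t in a..T, (F t - H t) * deriv (fun t => t - a) t = (T - a) * c := by
    rw [intervalIntegral.integral_congr (g := fun _ => c) fun t ht => by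
      simpa using hc (uIcc_of_le haT.le ▸ ht)]
    simp
  rw [hconst] at hlin
  have hsum : H T + (∫ t in a..T, K t) + c = 0 :=
    (mul_eq_zero.1 (by linarith : (H T + (∫ t in a..T, K t) + c) * (T - a) = 0)).resolve_right
      (sub_ne_zero.2 haT.ne')
  rw [hFH (right_mem_Icc.2 haT.le)]
  linarith

end EulerLagrange

theorem deriv_eq_of_eqOn_Icc {a b t : ℝ} {F g : ℝ → ℝ} {g' : ℝ} (hab : a < b) (ht : t ∈ Icc a b)
    (hF : DifferentiableAt ℝ F t) (hFg : EqOn F g (Icc a b)) (hg : HasDerivAt g g' t) :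
    deriv F t = g' := by
  have hu := uniqueDiffOn_Icc hab t ht
  rw [← hF.hasDerivAt.hasDerivWithinAt.derivWithin hu]
  exact (hg.hasDerivWithinAt.congr hFg (hFg ht)).derivWithin hu

/-- Necessary conditions (Euler–Lagrange equation and new transversality condition)
for a local `C¹` extremizer of `J[y] = ∫_a^T f (t, y t, y' t, y T) dt` with `y a = α`
and `y T` free. -/
theorem nonclassical_necessary_conditions
    (a T α : ℝ) (haT : a < T)
    (f : ℝ → ℝ → ℝ → ℝ → ℝ)
    (hf : ContDiff ℝ 1 (fun p : ℝ × ℝ × ℝ × ℝ => f p.1 p.2.1 p.2.2.1 p.2.2.2))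
    (ytil : ℝ → ℝ) (hy : ContDiff ℝ 1 ytil) (hya : ytil a = α)
    (hFdiff : ∀ t ∈ Icc a T,
      DifferentiableAt ℝ (fun s => fv f s (ytil s) (deriv ytil s) (ytil T)) t)
    (hext : ∃ ε > 0,
      ((∀ y : ℝ → ℝ, ContDiff ℝ 1 y → y a = α →
          (∀ t ∈ Icc a T, |y t - ytil t| < ε ∧ |deriv y t - deriv ytil t| < ε) →
          (∫ t in a..T, f t (y t) (deriv y t) (y T)) ≤
            ∫ t in a..T, f t (ytil t) (deriv ytil t) (ytil T)) ∨
        (∀ y : ℝ → ℝ, ContDiff ℝ 1 y → y a = α →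
          (∀ t ∈ Icc a T, |y t - ytil t| < ε ∧ |deriv y t - deriv ytil t| < ε) →
          (∫ t in a..T, f t (ytil t) (deriv ytil t) (ytil T)) ≤
            ∫ t in a..T, f t (y t) (deriv y t) (y T)))) :
    (∀ t ∈ Icc a T,
      deriv (fun s => fv f s (ytil s) (deriv ytil s) (ytil T)) t
        = fy f t (ytil t) (deriv ytil t) (ytil T)) ∧
    fv f T (ytil T) (deriv ytil T) (ytil T)
      = - ∫ t in a..T, fz f t (ytil t) (deriv ytil t) (ytil T) := by
  have hyc := hy.continuous
  have hy'c := hy.continuous_deriv le_rfl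
  have hP : Continuous fun t => (t, ytil t, deriv ytil t, ytil T) := by fun_prop
  have hfy := (continuous_fy hf).comp hP
  obtain ⟨c, hfv, hfz⟩ := exists_eqOn_primitive_add_const_of_first_variation haT hfy
    ((continuous_fv hf).comp hP) ((continuous_fz hf).comp hP)
    fun η hη hηa =>
      IsLocalC1Extremizer.integral_first_variation_eq_zero hext hf hy hya hη hηa
  exact ⟨fun t ht => deriv_eq_of_eqOn_Icc haT ht (hFdiff t ht) hfv
    ((hfy.integral_hasStrictDerivAt a t).hasDerivAt.add_const c), hfz⟩
end

section
/- Let c, z ∈ ℝ with c > 2z > 0, set D = √(c² − 4z²), g(t) = c + 2z sin(π t / 10), and h(t) = arctan( (2z + c tan(π t / 20)) / D ). Define y : [0,10) → ℝ by y(t) = 20 ( −arctan(2z / D) · g(t) · c² + h(t) · g(t) · c² − z D ( −c cos(π t / 10) + g(t) ) ) / ( c π D³ g(t) ). Then y(0) = 0 and y is differentiable on [0,10) with y'(t) = (c + 2z sin(π t / 10))^{-2} for every t ∈ [0,10). -/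
/-!
Put `a = 2 z` and `θ = π t / 20`, so that the integrand is `(c + a sin 2θ)⁻²`. Where `cos θ ≠ 0`
and `D² = c² − a²`, the identity `D² cos² θ + (a cos θ + c sin θ)² = c (c + a sin 2θ)` makes
`θ ↦ arctan ((a + c tan θ) / D)` a primitive of `D / (c + a sin 2θ)`, and adding the rational
correction `(a c D / 2) · cos 2θ / (c + a sin 2θ)` gives a primitive of `c D³ / (c + a sin 2θ)²`.
The given `y` is this primitive at `θ = π t / 20`, shifted to vanish at `0` and scaled by
`20 / (c π D³)`; on `[0, 10)` we have `θ ∈ [0, π / 2)`, so `cos θ > 0`.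
-/
open Set Real

namespace Real

variable {a b D θ : ℝ}

theorem sq_mul_cos_sq_add_sq_eq (hD : D ^ 2 = b ^ 2 - a ^ 2) :
    D ^ 2 * cos θ ^ 2 + (a * cos θ + b * sin θ) ^ 2 = b * (b + a * sin (2 * θ)) := by
  rw [sin_two_mul]
  linear_combination cos θ ^ 2 * hD + b ^ 2 * sin_sq_add_cos_sq θ

theorem mul_add_mul_sin_two_mul_pos (hD : D ^ 2 = b ^ 2 - a ^ 2) (hD0 : D ≠ 0) (hθ : cos θ ≠ 0) :
    0 < b * (b + a * sin (2 * θ)) := by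
  rw [← sq_mul_cos_sq_add_sq_eq hD]
  positivity

theorem hasDerivAt_arctan_affine_tan (hD : D ^ 2 = b ^ 2 - a ^ 2) (hD0 : D ≠ 0)
    (hθ : cos θ ≠ 0) :
    HasDerivAt (fun x => arctan ((a + b * tan x) / D)) (D / (b + a * sin (2 * θ))) θ := by
  have hpos := mul_add_mul_sin_two_mul_pos hD hD0 hθ
  have hsin : b + a * sin (2 * θ) ≠ 0 := by rintro h; simp [h] at hpos
  refine ((((hasDerivAt_tan hθ).const_mul b).const_add a).div_const D).arctan.congr_deriv ?_
  rw [tan_eq_sin_div_cos]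
  field_simp
  linear_combination -sq_mul_cos_sq_add_sq_eq (θ := θ) hD

theorem hasDerivAt_cos_div_add_mul_sin {c φ : ℝ} (hφ : c + a * sin φ ≠ 0) :
    HasDerivAt (fun x => cos x / (c + a * sin x)) (-(a + c * sin φ) / (c + a * sin φ) ^ 2) φ := by
  refine ((hasDerivAt_cos φ).div ((hasDerivAt_sin φ).const_mul a |>.const_add c) hφ).congr_deriv ?_
  linear_combination (-a / (c + a * sin φ) ^ 2) * sin_sq_add_cos_sq φ

noncomputable def invSqAntideriv (a c D θ : ℝ) : ℝ :=
  c ^ 2 * arctan ((a + c * tan θ) / D) + a * c * D / 2 * (cos (2 * θ) / (c + a * sin (2 * θ)))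

theorem hasDerivAt_invSqAntideriv {c : ℝ} (hD : D ^ 2 = c ^ 2 - a ^ 2) (hD0 : D ≠ 0)
    (hθ : cos θ ≠ 0) :
    HasDerivAt (invSqAntideriv a c D) (c * D ^ 3 / (c + a * sin (2 * θ)) ^ 2) θ := by
  have hg : c + a * sin (2 * θ) ≠ 0 :=
    right_ne_zero_of_mul (mul_add_mul_sin_two_mul_pos hD hD0 hθ).ne'
  have hquot : HasDerivAt (fun x => cos (2 * x) / (c + a * sin (2 * x))) _ θ :=
    (hasDerivAt_cos_div_add_mul_sin hg).comp θ ((hasDerivAt_id θ).const_mul 2)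
  refine ((hasDerivAt_arctan_affine_tan hD hD0 hθ).const_mul (c ^ 2) |>.add
    (hquot.const_mul (a * c * D / 2))).congr_deriv ?_
  field_simp
  linear_combination -c * hD

end Real

/-- The explicit function `y` built from `g`, `h` and `arctan (2 z / D)` satisfies
`y 0 = 0` and is an antiderivative on `[0, 10)` of `u t = (c + 2 z sin (π t / 10))⁻²`,
where `c > 2 z > 0` and `D = √(c² − 4 z²)`. -/
theorem example_state_trajectory_closed_form
    (c z : ℝ) (hz : 0 < z) (hc : 2 * z < c)
    (D : ℝ) (hD : D = Real.sqrt (c ^ 2 - 4 * z ^ 2))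
    (g h y : ℝ → ℝ)
    (hg : ∀ t, g t = c + 2 * z * Real.sin (π * t / 10))
    (hh : ∀ t, h t = Real.arctan ((2 * z + c * Real.tan (π * t / 20)) / D))
    (hy : ∀ t, y t =
      20 * (-(Real.arctan (2 * z / D)) * g t * c ^ 2 + h t * g t * c ^ 2
            - z * D * (-(c * Real.cos (π * t / 10)) + g t))
        / (c * π * D ^ 3 * g t)) :
    y 0 = 0 ∧
    ∀ t ∈ Ico (0 : ℝ) 10,
      HasDerivAt y (((c + 2 * z * Real.sin (π * t / 10)) ^ 2)⁻¹) t := by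
  have hc0 : 0 < c := by linarith
  have hD2 : D ^ 2 = c ^ 2 - (2 * z) ^ 2 := by
    rw [hD, sq_sqrt (by nlinarith)]
    ring
  have hDpos : 0 < D := by rw [hD]; exact sqrt_pos.2 (by nlinarith)
  have hg0 : ∀ t, 0 < g t := fun t => by nlinarith [hg t, neg_one_le_sin (π * t / 10)]
  have hy_eq : y = fun t => 20 / (c * π * D ^ 3) *
      (invSqAntideriv (2 * z) c D (π * t / 20) - (c ^ 2 * arctan (2 * z / D) + z * D)) := by
    funext t
    have hgt := hg0 t
    rw [hy, hh, invSqAntideriv, show 2 * (π * t / 20) = π * t / 10 by ring, ← hg]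
    field_simp
    ring
  refine ⟨by simp [hy, hh, hg], fun t ⟨ht0, ht10⟩ => ?_⟩
  have hcos : cos (π * t / 20) ≠ 0 :=
    (cos_pos_of_mem_Ioo ⟨by nlinarith [pi_pos], by nlinarith [pi_pos]⟩).ne'
  have hθ : HasDerivAt (fun t => π * t / 20) (π / 20) t := by
    simpa using ((hasDerivAt_id t).const_mul π).div_const 20
  rw [hy_eq]
  refine (((hasDerivAt_invSqAntideriv hD2 hDpos.ne' hcos).comp t hθ).sub_const _
    |>.const_mul _).congr_deriv ?_
  rw [show 2 * (π * t / 20) = π * t / 10 by ring, ← hg]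
  have hgt := hg0 t
  field_simp
end
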